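/- If L ⊆ ω^ω is a Σ⁰₁ (open) subset of the Baire space, then the set L' = φ(L) ∪ D₂ ∪ D₃ ∪ D₄ is a Δ⁰₃ subset of the Cantor space {0,1}^ω, where D₂, D₃, D₄ are the ω-regular 'error' sets describing plays in which Player 2 breaks the coding φ. -/

import Mathlib

/-- Cumulative concatenation of the first `n` blocks. -/
def cumCat {C : Type*} (b : ℕ → List C) : ℕ → List C
  | 0 => []
  | n + 1 => cumCat b n ++ b n

/-- The infinite word obtained by concatenating the (nonempty) blocks `b 0, b 1, …`. -/
def infCat {C : Type*} (b : ℕ → List C) (d : C) : ℕ → C :=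
  fun i => (cumCat b (i + 1)).getD i d

/-- The binary block `(11)^k·0` (with `1 = true`, `0 = false`). -/
def goodBlock (k : ℕ) : List Bool := List.replicate (2 * k) true ++ [false]

/-- The coding `φ : ω^ω → {0,1}^ω`, `φ((n_i)) = (11)^{n_1+1}·0·(11)^{n_2+1}·0⋯`. -/
def phiCode (x : ℕ → ℕ) : ℕ → Bool :=
  infCat (fun n => goodBlock (x n + 1)) false

/-- `w` is a finite prefix of the infinite word `y`. -/
def listPrefixOf (w : List Bool) (y : ℕ → Bool) : Prop :=
  ∀ i, i < w.length → w.getD i false = y i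

/-- `isBlocksCat n w` : the finite word `w` is a concatenation of `n` blocks of the
form `(11)^k·0` with `k ≥ 1`, i.e. `w ∈ [(11)^+·0]^n`. -/
def isBlocksCat : ℕ → List Bool → Prop
  | 0, w => w = []
  | n + 1, w => ∃ k ≥ 1, ∃ w', w = goodBlock k ++ w' ∧ isBlocksCat n w'

/-- `D₂ = {y : ∃ n,k ≥ 0, y ∈ [(11)^+0]^{2n}·1^{2k+1}·0·{0,1}^ω}`. -/
def Dtwo : Set (ℕ → Bool) :=
  {y | ∃ n k w, isBlocksCat (2 * n) w ∧
        listPrefixOf (w ++ List.replicate (2 * k + 1) true ++ [false]) y}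

/-- `D₃ = {y : ∃ n ≥ 0, y ∈ [(11)^+0]^{2n+1}·1^ω}`. -/
def Dthree : Set (ℕ → Bool) :=
  {y | ∃ n w, isBlocksCat (2 * n + 1) w ∧ listPrefixOf w y ∧ ∀ i ≥ w.length, y i = true}

/-- `D₄ = {y : ∃ n ≥ 0, y ∈ [(11)^+0]^{2n+1}·0·{0,1}^ω}`. -/
def Dfour : Set (ℕ → Bool) :=
  {y | ∃ n w, isBlocksCat (2 * n + 1) w ∧ listPrefixOf (w ++ [false]) y}

/-- An `F_σ` set: a countable union of closed sets (i.e. a `Σ⁰₂` set). -/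
def IsFsigma {Z : Type*} [TopologicalSpace Z] (S : Set Z) : Prop :=
  ∃ f : ℕ → Set Z, (∀ n, IsClosed (f n)) ∧ S = ⋃ n, f n

/-- A `Σ⁰₃` set: a countable union of `Π⁰₂` (G_δ) sets. -/
def IsSigma03 {Z : Type*} [TopologicalSpace Z] (S : Set Z) : Prop :=
  ∃ f : ℕ → Set Z, (∀ n, IsGδ (f n)) ∧ S = ⋃ n, f n

/-- A `Π⁰₃` set: a countable intersection of `Σ⁰₂` (F_σ) sets. -/
def IsPi03 {Z : Type*} [TopologicalSpace Z] (S : Set Z) : Prop :=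
  ∃ f : ℕ → Set Z, (∀ n, IsFsigma (f n)) ∧ S = ⋂ n, f n

/-! Blocks `(11)^k0` with `k ≥ 1` are uniquely readable: a prefix of a word consisting of `m`
blocks is determined by the word and `m`. Hence the range of `φ` is the `G_δ` set of words having
such a prefix for every `m`, and since a prefix of `φ(x)` with `n` blocks determines `x` below
`n`, the image of an open `L` is open in that range, so it is `G_δ`. The sets `D₂` and `D₄` are
open and `D₃` is countable, so `D₂ ∪ D₃ ∪ D₄` is `F_σ`. In a perfectly normal space such as the
Cantor space, the union of a `G_δ` and an `F_σ` set is both `Σ⁰₃` and `Π⁰₃`. -/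

open Set

section BorelClasses

variable {Z : Type*} [TopologicalSpace Z] {A B : Set Z}

lemma isFsigma_iff_isGδ_compl : IsFsigma A ↔ IsGδ Aᶜ := by
  rw [isGδ_iff_eq_iInter_nat]
  constructor
  · rintro ⟨f, hf, rfl⟩
    exact ⟨fun n => (f n)ᶜ, fun n => (hf n).isOpen_compl, compl_iUnion f⟩
  · rintro ⟨f, hf, hA⟩
    refine ⟨fun n => (f n)ᶜ, fun n => (hf n).isClosed_compl, ?_⟩
    rw [← compl_iInter, ← hA, compl_compl]

lemma IsFsigma.union (hA : IsFsigma A) (hB : IsFsigma B) : IsFsigma (A ∪ B) := by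
  rw [isFsigma_iff_isGδ_compl, compl_union] at *
  exact hA.inter hB

lemma Set.Countable.isFsigma [T1Space Z] (hA : A.Countable) : IsFsigma A :=
  isFsigma_iff_isGδ_compl.2 hA.isGδ_compl

lemma IsOpen.isFsigma [PerfectlyNormalSpace Z] (hA : IsOpen A) : IsFsigma A :=
  isFsigma_iff_isGδ_compl.2 hA.isClosed_compl.isGδ

lemma IsGδ.isSigma03_union [PerfectlyNormalSpace Z] (hA : IsGδ A) (hB : IsFsigma B) :
    IsSigma03 (A ∪ B) := by
  obtain ⟨f, hf, rfl⟩ := hB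
  exact ⟨fun n => A ∪ f n, fun n => hA.union (hf n).isGδ, union_iUnion A f⟩

lemma IsGδ.isPi03_union [PerfectlyNormalSpace Z] (hA : IsGδ A) (hB : IsFsigma B) :
    IsPi03 (A ∪ B) := by
  obtain ⟨f, hf, rfl⟩ := hA.eq_iInter_nat
  exact ⟨fun n => f n ∪ B, fun n => (hf n).isFsigma.union hB, iInter_union f B⟩

end BorelClasses

section Cylinders

lemma isOpen_setOf_listPrefixOf (w : List Bool) : IsOpen {y : ℕ → Bool | listPrefixOf w y} := by
  have : {y : ℕ → Bool | listPrefixOf w y} = (Iio w.length).pi fun i => {w.getD i false} := by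
    ext y; simp [listPrefixOf, eq_comm]
  rw [this]
  exact isOpen_set_pi (finite_Iio _) fun _ _ => isOpen_discrete _

lemma isOpen_of_forall_listPrefixOf {S : Set (ℕ → Bool)}
    (h : ∀ y ∈ S, ∃ w, listPrefixOf w y ∧ {z | listPrefixOf w z} ⊆ S) : IsOpen S :=
  isOpen_iff_forall_mem_open.2 fun y hy =>
    let ⟨w, hw, hsub⟩ := h y hy
    ⟨_, hsub, isOpen_setOf_listPrefixOf w, hw⟩

lemma isOpen_Dtwo : IsOpen Dtwo :=
  isOpen_of_forall_listPrefixOf fun _ ⟨n, k, w, hw, hy⟩ => ⟨_, hy, fun _ hz => ⟨n, k, w, hw, hz⟩⟩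

lemma isOpen_Dfour : IsOpen Dfour :=
  isOpen_of_forall_listPrefixOf fun _ ⟨n, w, hw, hy⟩ => ⟨_, hy, fun _ hz => ⟨n, w, hw, hz⟩⟩

-- A point of `D₃` is determined by its finite part: it is `w` followed by `1^ω`.
lemma countable_Dthree : Dthree.Countable := by
  refine (countable_range fun (w : List Bool) i => w.getD i true).mono ?_
  rintro y ⟨-, w, -, hw, htail⟩
  refine ⟨w, funext fun i => ?_⟩
  show w.getD i true = y i
  rcases lt_or_ge i w.length with hi | hi
  · rw [← hw i hi, List.getD_eq_getElem _ _ hi, List.getD_eq_getElem _ _ hi]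
  · rw [List.getD_eq_default _ _ hi, htail i hi]

end Cylinders

section WordCombinatorics

lemma cumCat_isPrefix {C : Type*} (b : ℕ → List C) {m m' : ℕ} (h : m ≤ m') :
    cumCat b m <+: cumCat b m' := by
  induction m', h using Nat.le_induction with
  | base => exact List.prefix_rfl
  | succ n _ ih => exact ih.trans (List.prefix_append _ _)

lemma le_length_cumCat {C : Type*} {b : ℕ → List C} (hb : ∀ n, b n ≠ []) (m : ℕ) :
    m ≤ (cumCat b m).length := by
  induction m with
  | zero => exact le_rfl
  | succ n ih =>
    have := List.length_pos_iff.2 (hb n)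
    simp only [cumCat, List.length_append]
    omega

lemma infCat_eq_getD_cumCat {C : Type*} {b : ℕ → List C} (hb : ∀ n, b n ≠ []) (d : C)
    {m i : ℕ} (hi : i < (cumCat b m).length) : infCat b d i = (cumCat b m).getD i d := by
  have hi' : i < (cumCat b (i + 1)).length := (le_length_cumCat hb _).trans_lt' (by omega)
  rcases le_total m (i + 1) with h | h
  · rw [infCat, List.getD_eq_getElem _ _ hi, List.getD_eq_getElem _ _ hi',
      (cumCat_isPrefix b h).getElem hi]
  · rw [infCat, List.getD_eq_getElem _ _ hi, List.getD_eq_getElem _ _ hi',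
      (cumCat_isPrefix b h).getElem hi']

lemma goodBlock_length (k : ℕ) : (goodBlock k).length = 2 * k + 1 := by
  simp [goodBlock]

lemma listPrefixOf_append {a b : List Bool} {y : ℕ → Bool} :
    listPrefixOf (a ++ b) y ↔
      listPrefixOf a y ∧ listPrefixOf b (fun i => y (a.length + i)) := by
  constructor
  · intro h
    refine ⟨fun i hi => ?_, fun i hi => ?_⟩
    · rw [← List.getD_append a b false i hi]
      exact h i (by simp; omega)
    · have h2 := h (a.length + i) (by simp; omega)
      rwa [List.getD_append_right a b false _ (by omega), Nat.add_sub_cancel_left] at h2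
  · rintro ⟨h1, h2⟩ i hi
    rw [List.length_append] at hi
    rcases lt_or_ge i a.length with hia | hia
    · rw [List.getD_append a b false i hia]
      exact h1 i hia
    · rw [List.getD_append_right a b false i hia, h2 (i - a.length) (by omega)]
      simp only [Nat.add_sub_cancel' hia]

lemma listPrefixOf_of_isPrefix {w w' : List Bool} {y : ℕ → Bool} (h : w <+: w')
    (h' : listPrefixOf w' y) : listPrefixOf w y := by
  obtain ⟨t, rfl⟩ := h
  exact (listPrefixOf_append.1 h').1

lemma listPrefixOf_goodBlock {k : ℕ} {y : ℕ → Bool} (h : listPrefixOf (goodBlock k) y) :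
    (∀ i < 2 * k, y i = true) ∧ y (2 * k) = false := by
  refine ⟨fun i hi => ?_, ?_⟩
  · rw [← h i (by rw [goodBlock_length]; omega)]
    simp [goodBlock, List.getElem?_append, hi]
  · rw [← h (2 * k) (by rw [goodBlock_length]; omega)]
    simp [goodBlock]

lemma eq_of_listPrefixOf_goodBlock {k k' : ℕ} {y : ℕ → Bool}
    (h : listPrefixOf (goodBlock k) y) (h' : listPrefixOf (goodBlock k') y) : k = k' := by
  obtain ⟨htrue, hfalse⟩ := listPrefixOf_goodBlock h
  obtain ⟨htrue', hfalse'⟩ := listPrefixOf_goodBlock h'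
  by_contra hne
  rcases Nat.lt_or_gt_of_ne hne with hlt | hlt
  · simp [htrue' (2 * k) (by omega)] at hfalse
  · simp [htrue (2 * k') (by omega)] at hfalse'

lemma isBlocksCat_snoc {m : ℕ} {w : List Bool} :
    isBlocksCat (m + 1) w ↔ ∃ v k, isBlocksCat m v ∧ 1 ≤ k ∧ w = v ++ goodBlock k := by
  induction m generalizing w with
  | zero =>
    simp only [isBlocksCat]
    constructor
    · rintro ⟨k, hk, w', rfl, rfl⟩
      exact ⟨[], k, rfl, hk, by simp⟩
    · rintro ⟨v, k, rfl, hk, rfl⟩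
      exact ⟨k, hk, [], by simp, rfl⟩
  | succ n ih =>
    constructor
    · rintro ⟨k, hk, w', rfl, hw'⟩
      obtain ⟨v, k', hv, hk', rfl⟩ := ih.1 hw'
      exact ⟨goodBlock k ++ v, k', ⟨k, hk, v, rfl, hv⟩, hk', by simp⟩
    · rintro ⟨v, k, ⟨k', hk', v', rfl, hv'⟩, hk, rfl⟩
      exact ⟨k', hk', v' ++ goodBlock k, by simp, ih.2 ⟨v', k, hv', hk, rfl⟩⟩

lemma isBlocksCat_unique {m : ℕ} {w w' : List Bool} {y : ℕ → Bool}
    (h : isBlocksCat m w) (h' : isBlocksCat m w')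
    (hp : listPrefixOf w y) (hp' : listPrefixOf w' y) : w = w' := by
  induction m generalizing w w' y with
  | zero => exact h.trans h'.symm
  | succ n ih =>
    obtain ⟨k, -, v, rfl, hv⟩ := h
    obtain ⟨k', -, v', rfl, hv'⟩ := h'
    obtain ⟨hg, hr⟩ := listPrefixOf_append.1 hp
    obtain ⟨hg', hr'⟩ := listPrefixOf_append.1 hp'
    obtain rfl := eq_of_listPrefixOf_goodBlock hg hg'
    rw [ih hv hv' hr hr']

end WordCombinatorics

section Coding

def phiBlocks (x : ℕ → ℕ) (n : ℕ) : List Bool := goodBlock (x n + 1)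

lemma phiBlocks_ne_nil (x : ℕ → ℕ) (n : ℕ) : phiBlocks x n ≠ [] := by
  simp [phiBlocks, goodBlock]

lemma listPrefixOf_cumCat_phiCode (x : ℕ → ℕ) (m : ℕ) :
    listPrefixOf (cumCat (phiBlocks x) m) (phiCode x) := fun _ hi =>
  (infCat_eq_getD_cumCat (phiBlocks_ne_nil x) false hi).symm

lemma isBlocksCat_cumCat_phiBlocks (x : ℕ → ℕ) (m : ℕ) :
    isBlocksCat m (cumCat (phiBlocks x) m) := by
  induction m with
  | zero => rfl
  | succ n ih => exact isBlocksCat_snoc.2 ⟨_, x n + 1, ih, by omega, rfl⟩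

lemma eq_of_listPrefixOf_cumCat_phiBlocks {x x' : ℕ → ℕ} {y : ℕ → Bool} {n : ℕ}
    (h : listPrefixOf (cumCat (phiBlocks x) n) y)
    (h' : listPrefixOf (cumCat (phiBlocks x') n) y) {i : ℕ} (hi : i < n) : x i = x' i := by
  have hcum : ∀ m ≤ n, cumCat (phiBlocks x) m = cumCat (phiBlocks x') m := fun m hm =>
    isBlocksCat_unique (isBlocksCat_cumCat_phiBlocks x m) (isBlocksCat_cumCat_phiBlocks x' m)
      (listPrefixOf_of_isPrefix (cumCat_isPrefix _ hm) h)
      (listPrefixOf_of_isPrefix (cumCat_isPrefix _ hm) h')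
  have hblock : goodBlock (x i + 1) = goodBlock (x' i + 1) := by
    have := hcum (i + 1) hi
    rwa [cumCat, cumCat, hcum i hi.le, List.append_cancel_left_eq] at this
  have := congrArg List.length hblock
  simp only [goodBlock_length] at this
  omega

lemma mem_range_phiCode {y : ℕ → Bool} (h : ∀ m, ∃ w, isBlocksCat m w ∧ listPrefixOf w y) :
    y ∈ range phiCode := by
  choose w hw hp using h
  have hstep : ∀ m, ∃ k, w (m + 1) = w m ++ goodBlock (k + 1) := by
    intro m
    obtain ⟨v, k, hv, hk, he⟩ := isBlocksCat_snoc.1 (hw (m + 1))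
    have hvm : v = w m := isBlocksCat_unique hv (hw m)
      (listPrefixOf_of_isPrefix ⟨_, he.symm⟩ (hp (m + 1))) (hp m)
    exact ⟨k - 1, by rw [he, hvm, Nat.sub_add_cancel hk]⟩
  choose x hx using hstep
  have hcum : ∀ m, cumCat (phiBlocks x) m = w m := by
    intro m
    induction m with
    | zero => exact (hw 0).symm
    | succ n ih => rw [hx, ← ih]; rfl
  refine ⟨x, funext fun i => ?_⟩
  have hprefix : listPrefixOf (cumCat (phiBlocks x) (i + 1)) y := hcum (i + 1) ▸ hp (i + 1)
  exact hprefix i (le_length_cumCat (phiBlocks_ne_nil x) _)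

lemma range_phiCode :
    range phiCode = ⋂ m, {y | ∃ w, isBlocksCat m w ∧ listPrefixOf w y} := by
  ext y
  rw [mem_iInter]
  refine ⟨?_, mem_range_phiCode⟩
  rintro ⟨x, rfl⟩ m
  exact ⟨_, isBlocksCat_cumCat_phiBlocks x m, listPrefixOf_cumCat_phiCode x m⟩

lemma isGδ_range_phiCode : IsGδ (range phiCode) := by
  rw [range_phiCode]
  exact .iInter_of_isOpen fun m => isOpen_of_forall_listPrefixOf fun _ ⟨w, hw, hy⟩ =>
    ⟨w, hy, fun _ hz => ⟨w, hw, hz⟩⟩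

lemma exists_cylinder_subset {L : Set (ℕ → ℕ)} (hL : IsOpen L) {x : ℕ → ℕ} (hx : x ∈ L) :
    ∃ n, PiNat.cylinder x n ⊆ L := by
  obtain ⟨_, ⟨z, n, rfl⟩, hxz, hsub⟩ :=
    (PiNat.isTopologicalBasis_cylinders fun _ => ℕ).exists_subset_of_mem_open hx hL
  exact ⟨n, PiNat.mem_cylinder_iff_eq.1 hxz ▸ hsub⟩

lemma image_phiCode_eq {L : Set (ℕ → ℕ)} (hL : IsOpen L) :
    phiCode '' L = range phiCode ∩
      {y | ∃ x n, PiNat.cylinder x n ⊆ L ∧ listPrefixOf (cumCat (phiBlocks x) n) y} := by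
  apply Subset.antisymm
  · rintro _ ⟨x, hx, rfl⟩
    obtain ⟨n, hn⟩ := exists_cylinder_subset hL hx
    exact ⟨mem_range_self x, x, n, hn, listPrefixOf_cumCat_phiCode x n⟩
  · rintro _ ⟨⟨x', rfl⟩, x, n, hn, hpre⟩
    refine ⟨x', hn fun i hi => ?_, rfl⟩
    exact (eq_of_listPrefixOf_cumCat_phiBlocks hpre (listPrefixOf_cumCat_phiCode x' n) hi).symm

lemma IsOpen.isGδ_image_phiCode {L : Set (ℕ → ℕ)} (hL : IsOpen L) : IsGδ (phiCode '' L) := by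
  rw [image_phiCode_eq hL]
  exact isGδ_range_phiCode.inter <| IsOpen.isGδ <| isOpen_of_forall_listPrefixOf
    fun _ ⟨x, n, hn, hy⟩ => ⟨_, hy, fun _ hz => ⟨x, n, hn, hz⟩⟩

end Coding

/-- If `L ⊆ ω^ω` is open, then `L' = φ(L) ∪ D₂ ∪ D₃ ∪ D₄` is a `Δ⁰₃` subset of the
Cantor space `{0,1}^ω`. -/
theorem coded_game_set_delta03 (L : Set (ℕ → ℕ)) (hL : IsOpen L) :
    IsSigma03 (phiCode '' L ∪ Dtwo ∪ Dthree ∪ Dfour) ∧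
    IsPi03 (phiCode '' L ∪ Dtwo ∪ Dthree ∪ Dfour) := by
  have hA : IsGδ (phiCode '' L) := hL.isGδ_image_phiCode
  have hB : IsFsigma (Dtwo ∪ (Dthree ∪ Dfour)) :=
    isOpen_Dtwo.isFsigma.union (countable_Dthree.isFsigma.union isOpen_Dfour.isFsigma)
  rw [union_assoc, union_assoc]
  exact ⟨hA.isSigma03_union hB, hA.isPi03_union hB⟩
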